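/- arXiv:2309.14645 — 6 statements merged into one kernel-verified Lean document; each statement's English description precedes it below -/
import Mathlib

section
/- Let n ≥ 1, let a = (a₁,…,aₙ) ∈ ℝⁿ and let m₁,…,m_{2n} ∈ ℝ. Assume that every complex root of the polynomial λⁿ + aₙλ^{n−1} + ⋯ + a₂λ + a₁ (the characteristic polynomial of Φ(a)) has real part equal to zero, and that every complex root of the polynomial λ^{2n} + m_{2n}λ^{2n−1} + ⋯ + m₂λ + m₁ has strictly negative real part. Then the matrix Ξ(a) = Φ(a)^{2n} + Σ_{j=1}^{2n} mⱼ Φ(a)^{j−1} is invertible. -/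
open Matrix Polynomial

/-- The `n × n` real companion matrix `Φ(a)`: superdiagonal ones,
last row `(-a₁, …, -aₙ)`, all other entries `0`. -/
noncomputable def companion (n : ℕ) (a : Fin n → ℝ) : Matrix (Fin n) (Fin n) ℝ :=
  Matrix.of fun i j =>
    if (i : ℕ) = n - 1 then -a j
    else if (j : ℕ) = (i : ℕ) + 1 then 1 else 0

/-- The row vector `Γ = (1, 0, …, 0) ∈ ℝ^{1×n}`. -/
noncomputable def Gam (n : ℕ) : Matrix (Fin 1) (Fin n) ℝ :=
  Matrix.of fun _ j => if (j : ℕ) = 0 then 1 else 0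

/-- `Ξ(a) = Φ(a)^{2n} + Σ_{j=1}^{2n} mⱼ Φ(a)^{j-1}`. -/
noncomputable def Xi (n : ℕ) (a : Fin n → ℝ) (m : Fin (2*n) → ℝ) : Matrix (Fin n) (Fin n) ℝ :=
  companion n a ^ (2*n) + ∑ j : Fin (2*n), m j • companion n a ^ (j : ℕ)

/-- The `2n × n` matrix `Q` whose `j`-th row is `Qⱼ = Γ Ξ(a)⁻¹ Φ(a)^{j-1}`. -/
noncomputable def Qmat (n : ℕ) (a : Fin n → ℝ) (m : Fin (2*n) → ℝ) :
    Matrix (Fin (2*n)) (Fin n) ℝ :=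
  Matrix.of fun j k => (Gam n * (Xi n a m)⁻¹ * companion n a ^ (j : ℕ)) 0 k

/-- The `n × n` Hankel matrix `Θ(θ)` with entries `Θ(θ)_{i,j} = θ_{i+j-1}` (1-based). -/
noncomputable def hankel (n : ℕ) (θ : Fin (2*n) → ℝ) : Matrix (Fin n) (Fin n) ℝ :=
  Matrix.of fun i j => θ ⟨(i : ℕ) + (j : ℕ), by omega⟩

/-- if every root of `λⁿ + aₙλ^{n-1} + ⋯ + a₂λ + a₁` (the characteristic
polynomial of `Φ(a)`) has zero real part, and every root of
`λ^{2n} + m_{2n}λ^{2n-1} + ⋯ + m₂λ + m₁` has strictly negative real part, then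
`Ξ(a)` is invertible. -/
theorem statement0 (n : ℕ) (hn : 1 ≤ n) (a : Fin n → ℝ) (m : Fin (2*n) → ℝ)
    (ha : ∀ z : ℂ, z ^ n + ∑ j : Fin n, (a j : ℂ) * z ^ (j : ℕ) = 0 → z.re = 0)
    (hm : ∀ z : ℂ, z ^ (2*n) + ∑ j : Fin (2*n), (m j : ℂ) * z ^ (j : ℕ) = 0 → z.re < 0) :
    IsUnit (Xi n a m) := by
  haveI : NeZero n := ⟨by omega⟩
  set φ : Matrix (Fin n) (Fin n) ℝ →+* Matrix (Fin n) (Fin n) ℂ :=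
    (Complex.ofRealHom).mapMatrix with hφ
  set M : Matrix (Fin n) (Fin n) ℂ := φ (companion n a) with hM
  -- every point in the spectrum of M is a root of the a-polynomial, hence has re = 0
  have eig : ∀ lam : ℂ, lam ∈ spectrum ℂ M → lam.re = 0 := by
    intro lam hlam
    rw [spectrum.mem_iff, Matrix.isUnit_iff_isUnit_det, isUnit_iff_ne_zero, not_not] at hlam
    obtain ⟨v, hv0, hveq⟩ := Matrix.exists_mulVec_eq_zero_iff.mpr hlam
    set i0 : Fin n := ⟨0, hn⟩ with hi0
    have hMv : M.mulVec v = lam • v := by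
      have h1 : (algebraMap ℂ (Matrix (Fin n) (Fin n) ℂ) lam).mulVec v
          - M.mulVec v = 0 := by
        rw [← Matrix.sub_mulVec]; exact hveq
      have h2 : (algebraMap ℂ (Matrix (Fin n) (Fin n) ℂ) lam).mulVec v = lam • v := by
        rw [Algebra.algebraMap_eq_smul_one, Matrix.smul_mulVec, Matrix.one_mulVec]
      rw [h2] at h1
      exact (sub_eq_zero.mp h1).symm
    have hMentry : ∀ i j : Fin n, M i j =
        (if (i : ℕ) = n - 1 then (-(a j) : ℂ)
          else if (j : ℕ) = (i : ℕ) + 1 then 1 else 0) := by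
      intro i j
      simp only [hM, hφ, RingHom.mapMatrix_apply, Matrix.map_apply, companion, Matrix.of_apply]
      split <;> simp
    have hcomp : ∀ k : ℕ, ∀ hk : k < n, v ⟨k, hk⟩ = lam ^ k * v i0 := by
      intro k
      induction k with
      | zero => intro hk; simp [hi0]
      | succ k ih =>
        intro hk
        have hk' : k < n := by omega
        have hrow := congrFun hMv ⟨k, hk'⟩
        have hknot : ¬ ((k : ℕ) = n - 1) := by omega
        have hsum : (M.mulVec v) ⟨k, hk'⟩ = v ⟨k+1, hk⟩ := by
          rw [Matrix.mulVec]
          show ∑ j : Fin n, M ⟨k, hk'⟩ j * v j = _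
          rw [Finset.sum_eq_single (⟨k+1, hk⟩ : Fin n)]
          · rw [hMentry]; simp [hknot]
          · intro j _ hj
            rw [hMentry]
            simp only [hknot, if_false]
            have : ¬ ((j : ℕ) = k + 1) := by
              intro h; exact hj (Fin.ext h)
            simp [this]
          · simp
        rw [hsum] at hrow
        rw [hrow, Pi.smul_apply, smul_eq_mul, ih hk', pow_succ]
        ring
    have hvj : ∀ j : Fin n, v j = lam ^ (j : ℕ) * v i0 := fun j => by
      have := hcomp j j.2; rwa [Fin.eta] at this
    have hv00 : v i0 ≠ 0 := by
      intro h0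
      apply hv0
      funext j
      rw [Pi.zero_apply, hvj j, h0, mul_zero]
    have hlast : (M.mulVec v) ⟨n-1, by omega⟩ = ∑ j : Fin n, (-(a j) : ℂ) * v j := by
      rw [Matrix.mulVec]
      show ∑ j : Fin n, M ⟨n-1, by omega⟩ j * v j = _
      refine Finset.sum_congr rfl fun j _ => ?_
      rw [hMentry]; simp
    have hrow := congrFun hMv ⟨n-1, by omega⟩
    rw [hlast] at hrow
    have hvn : v (⟨n-1, by omega⟩ : Fin n) = lam ^ (n-1) * v i0 := hcomp (n-1) (by omega)
    have e1 : ∑ j : Fin n, (-(a j) : ℂ) * v j = lam * v ⟨n-1, by omega⟩ := by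
      simpa using hrow
    rw [hvn] at e1
    have e2 : lam * (lam ^ (n-1) * v i0) = lam ^ n * v i0 := by
      rw [← mul_assoc, ← pow_succ']
      congr 2
      omega
    rw [e2] at e1
    have e3 : ∑ j : Fin n, (-(a j) : ℂ) * v j
        = -((∑ j : Fin n, (a j : ℂ) * lam ^ (j : ℕ)) * v i0) := by
      rw [Finset.sum_mul, ← Finset.sum_neg_distrib]
      refine Finset.sum_congr rfl fun j _ => ?_
      rw [hvj j]; ring
    rw [e3] at e1
    have key : (lam ^ n + ∑ j : Fin n, (a j : ℂ) * lam ^ (j : ℕ)) * v i0 = 0 := by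
      rw [add_mul]
      linear_combination -e1
    rcases mul_eq_zero.mp key with h | h
    · exact ha lam h
    · exact absurd h hv00
  -- the polynomial q
  set q : ℂ[X] := X ^ (2*n) + ∑ j : Fin (2*n), C ((m j : ℂ)) * X ^ (j : ℕ) with hq
  have hdeg : 0 < q.degree := by
    have hlt : (∑ j : Fin (2*n), C ((m j : ℂ)) * X ^ (j : ℕ)).degree < (X ^ (2*n) : ℂ[X]).degree := by
      rw [degree_X_pow]
      refine lt_of_le_of_lt (Polynomial.degree_sum_le _ _) ?_
      rw [Finset.sup_lt_iff (by exact_mod_cast (WithBot.bot_lt_coe (2*n)))]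
      intro j _
      refine lt_of_le_of_lt (degree_C_mul_X_pow_le _ _) ?_
      exact_mod_cast j.2
    have : q.degree = (2*n : ℕ) := by
      rw [hq, degree_add_eq_left_of_degree_lt hlt, degree_X_pow]
    rw [this]
    exact_mod_cast Nat.pos_of_ne_zero (by omega)
  -- evaluating q on M gives the complexified Xi
  have haev : Polynomial.aeval M q = φ (Xi n a m) := by
    rw [hq, Xi]
    have hsmul : ∀ (r : ℝ) (P : Matrix (Fin n) (Fin n) ℝ), φ (r • P) = (r : ℂ) • φ P := by
      intro r P
      ext i k
      simp [hφ, Matrix.map_apply]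
    rw [map_add, map_add, map_sum, map_sum]
    congr 1
    · rw [map_pow, map_pow, aeval_X, hM]
    · refine Finset.sum_congr rfl fun j _ => ?_
      rw [_root_.map_mul, aeval_C, map_pow, aeval_X, ← Algebra.smul_def, hsmul, map_pow, hM]
  -- spectral mapping
  have hspec := spectrum.map_polynomial_aeval_of_degree_pos M q hdeg
  have h0 : (0 : ℂ) ∉ spectrum ℂ (Polynomial.aeval M q) := by
    rw [hspec]
    rintro ⟨lam, hlam, hev⟩
    have hre := eig lam hlam
    have : lam ^ (2*n) + ∑ j : Fin (2*n), (m j : ℂ) * lam ^ (j : ℕ) = 0 := by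
      rw [hq] at hev
      simpa [Polynomial.eval_finset_sum] using hev
    have := hm lam this
    linarith [hre ▸ this]
  have hunit : IsUnit (Polynomial.aeval M q) := (spectrum.zero_notMem_iff ℂ).mp h0
  rw [haev, Matrix.isUnit_iff_isUnit_det, ← RingHom.map_det] at hunit
  rw [Matrix.isUnit_iff_isUnit_det, isUnit_iff_ne_zero]
  intro hdet0
  rw [hdet0] at hunit
  simp at hunit
end

section
/- Let n ≥ 1, a ∈ ℝⁿ and m₁,…,m_{2n} ∈ ℝ, and assume Ξ(a) is invertible. Let Q ∈ ℝ^{2n×n} be the matrix whose j-th row is Qⱼ = Γ Ξ(a)^{−1} Φ(a)^{j−1}, let M be the 2n×2n companion matrix of (m₁,…,m_{2n}), and let N = (0,…,0,1)ᵀ ∈ ℝ^{2n}. Then the generalized Sylvester equation M Q = Q Φ(a) − N Γ holds. -/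
open Matrix

/-- The column vector `N = (0, …, 0, 1)ᵀ ∈ ℝ^{2n}` as a `2n × 1` matrix. -/
noncomputable def Nvec (n : ℕ) : Matrix (Fin (2*n)) (Fin 1) ℝ :=
  Matrix.of fun i _ => if (i : ℕ) = 2*n - 1 then 1 else 0

/-- with `M` the `2n × 2n` companion matrix of `(m₁, …, m_{2n})`,
`N = (0, …, 0, 1)ᵀ`, and `Q` the matrix whose `j`-th row is `Γ Ξ(a)⁻¹ Φ(a)^{j-1}`,
the generalized Sylvester equation `M Q = Q Φ(a) − N Γ` holds. -/
theorem statement3 (n : ℕ) (hn : 1 ≤ n) (a : Fin n → ℝ) (m : Fin (2*n) → ℝ)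
    (hXi : IsUnit (Xi n a m)) :
    companion (2*n) m * Qmat n a m = Qmat n a m * companion n a - Nvec n * Gam n := by
  have hdet : IsUnit (Xi n a m).det := (Matrix.isUnit_iff_isUnit_det _).mp hXi
  set A := companion n a with hA
  set X := Xi n a m with hX
  set G := Gam n with hG
  have hinv : X⁻¹ * X = 1 := Matrix.nonsing_inv_mul X hdet
  have hsum : (∑ l : Fin (2*n), m l • A ^ (l:ℕ)) = X - A ^ (2*n) := by
    rw [hX]; unfold Xi; rw [← hA]; abel
  have key : G * X⁻¹ * (∑ l : Fin (2*n), m l • A ^ (l:ℕ)) = G - G * X⁻¹ * A ^ (2*n) := by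
    rw [hsum, Matrix.mul_sub, Matrix.mul_assoc G X⁻¹ X, hinv, Matrix.mul_one,
      Matrix.mul_assoc]
  ext i k
  have rowmul : (Qmat n a m * companion n a) i k = (G * X⁻¹ * A ^ ((i:ℕ)+1)) 0 k := by
    rw [Matrix.mul_apply]
    simp only [Qmat, Matrix.of_apply, ← hA, ← hX, ← hG]
    rw [show (∑ k', (G * X⁻¹ * A ^ (i:ℕ)) 0 k' * A k' k)
        = ((G * X⁻¹ * A ^ (i:ℕ)) * A) 0 k from (Matrix.mul_apply).symm,
      Matrix.mul_assoc, ← pow_succ]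
  rw [Matrix.sub_apply, Matrix.mul_apply, rowmul]
  have hNG : (Nvec n * G) i k = (if (i:ℕ) = 2*n - 1 then 1 else 0) * G 0 k := by
    rw [Matrix.mul_apply, Fin.sum_univ_one]
    simp [Nvec]
  rw [hNG]
  by_cases h : (i:ℕ) = 2*n - 1
  · have h2n : (i:ℕ) + 1 = 2*n := by omega
    have lhs : ∑ l, companion (2*n) m i l * Qmat n a m l k
        = -((G * X⁻¹ * (∑ l : Fin (2*n), m l • A ^ (l:ℕ))) 0 k) := by
      rw [Matrix.mul_sum]
      simp only [Matrix.mul_smul, Matrix.sum_apply, Matrix.smul_apply, smul_eq_mul]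
      rw [← Finset.sum_neg_distrib]
      refine Finset.sum_congr rfl fun l _ => ?_
      have hMent : companion (2*n) m i l = -m l := by simp [companion, h]
      rw [hMent]
      simp only [Qmat, Matrix.of_apply, ← hA, ← hX, ← hG]
      ring
    rw [lhs, key, h2n, Matrix.sub_apply, if_pos h]
    ring
  · have hi1 : (i:ℕ) + 1 < 2*n := by omega
    have lhs : ∑ l, companion (2*n) m i l * Qmat n a m l k
        = Qmat n a m ⟨(i:ℕ)+1, hi1⟩ k := by
      rw [Finset.sum_eq_single (⟨(i:ℕ)+1, hi1⟩ : Fin (2*n))]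
      · simp [companion, h]
      · intro l _ hl
        have : (l:ℕ) ≠ (i:ℕ) + 1 := fun hc => hl (Fin.ext hc)
        simp [companion, h, this]
      · simp
    rw [lhs, if_neg h]
    simp only [Qmat, Matrix.of_apply, ← hA, ← hX, ← hG]
    ring
end

section
/- Let n ≥ 1, a ∈ ℝⁿ and m₁,…,m_{2n} ∈ ℝ, and assume Ξ(a) is invertible. Let Q ∈ ℝ^{2n×n} be the matrix whose j-th row is Qⱼ = Γ Ξ(a)^{−1} Φ(a)^{j−1}. For any ξ ∈ ℝⁿ set θ = Q ξ ∈ ℝ^{2n}. Then the n×n Hankel matrix Θ(θ) factors as Θ(θ) = Ξ(a)^{−1} · K, where K is the n×n Krylov matrix whose k-th column is Φ(a)^{k−1} ξ for k = 1,…,n. -/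
open Matrix

lemma gam_mul_pow (n : ℕ) (a : Fin n → ℝ) : ∀ (i : ℕ), i < n → ∀ (k : Fin n),
    (Gam n * companion n a ^ i) 0 k = if (k : ℕ) = i then 1 else 0 := by
  intro i
  induction i with
  | zero => intro _ k; simp [Gam]
  | succ i ih =>
    intro hi k
    have hb : ∀ b : Fin n, (Gam n * companion n a ^ i) 0 b
        = if (b : ℕ) = i then 1 else 0 := ih (by omega)
    rw [pow_succ, ← Matrix.mul_assoc, Matrix.mul_apply]
    rw [Finset.sum_eq_single (⟨i, by omega⟩ : Fin n)]
    · rw [hb, if_pos rfl, one_mul]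
      show companion n a ⟨i, by omega⟩ k = _
      simp only [companion, Matrix.of_apply]
      rw [if_neg (show ¬ i = n - 1 by omega)]
    · intro b _ hbne
      rw [hb, if_neg, zero_mul]
      intro hc
      exact hbne (Fin.ext hc)
    · intro h; exact absurd (Finset.mem_univ _) h

lemma xi_inv_commute (n : ℕ) (a : Fin n → ℝ) (m : Fin (2*n) → ℝ)
    (hXi : IsUnit (Xi n a m)) :
    Commute (Xi n a m)⁻¹ (companion n a) := by
  have hc : Commute (companion n a) (Xi n a m) := by
    refine Commute.add_right ((Commute.refl _).pow_right _) ?_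
    apply Commute.sum_right
    intro j _
    exact ((Commute.refl _).pow_right _).smul_right _
  have hdet : IsUnit (Xi n a m).det := (Matrix.isUnit_iff_isUnit_det _).mp hXi
  show (Xi n a m)⁻¹ * companion n a = companion n a * (Xi n a m)⁻¹
  have h1 : (Xi n a m)⁻¹ * (companion n a * Xi n a m) * (Xi n a m)⁻¹
      = (Xi n a m)⁻¹ * (Xi n a m * companion n a) * (Xi n a m)⁻¹ := by
    rw [hc.eq]
  calc (Xi n a m)⁻¹ * companion n a
      = (Xi n a m)⁻¹ * (companion n a * Xi n a m) * (Xi n a m)⁻¹ := by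
        rw [← mul_assoc, mul_assoc _ _ (Xi n a m)⁻¹, mul_assoc,
          Matrix.mul_nonsing_inv _ hdet, mul_one]
    _ = (Xi n a m)⁻¹ * (Xi n a m * companion n a) * (Xi n a m)⁻¹ := h1
    _ = companion n a * (Xi n a m)⁻¹ := by
        rw [← mul_assoc, Matrix.nonsing_inv_mul _ hdet, one_mul]

/-- for `θ = Q ξ`, the Hankel matrix `Θ(θ)` factors as `Ξ(a)⁻¹ · K`,
where `K` is the Krylov matrix whose `k`-th column is `Φ(a)^{k-1} ξ`. -/
theorem statement4 (n : ℕ) (hn : 1 ≤ n) (a : Fin n → ℝ) (m : Fin (2*n) → ℝ)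
    (hXi : IsUnit (Xi n a m)) (ξ : Fin n → ℝ) :
    hankel n (Qmat n a m *ᵥ ξ) =
      (Xi n a m)⁻¹ *
        Matrix.of (fun (i k : Fin n) => (companion n a ^ (k : ℕ) *ᵥ ξ) i) := by
  ext i j
  have hij : (i : ℕ) + (j : ℕ) < 2 * n := by omega
  have hcinv := (xi_inv_commute n a m hXi).pow_right (i : ℕ)
  show (Qmat n a m *ᵥ ξ) ⟨(i : ℕ) + (j : ℕ), hij⟩ = _
  have key : Gam n * (Xi n a m)⁻¹ * companion n a ^ ((i : ℕ) + (j : ℕ))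
      = (Gam n * companion n a ^ (i : ℕ)) * ((Xi n a m)⁻¹ * companion n a ^ (j : ℕ)) := by
    rw [pow_add, Matrix.mul_assoc, ← Matrix.mul_assoc ((Xi n a m)⁻¹), hcinv.eq,
      Matrix.mul_assoc, ← Matrix.mul_assoc]
  have hrow : ∀ k : Fin n, Qmat n a m ⟨(i : ℕ) + (j : ℕ), hij⟩ k
      = ((Xi n a m)⁻¹ * companion n a ^ (j : ℕ)) i k := by
    intro k
    show (Gam n * (Xi n a m)⁻¹ * companion n a ^ ((i : ℕ) + (j : ℕ))) 0 k = _
    rw [key, Matrix.mul_apply]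
    rw [Finset.sum_eq_single i]
    · rw [gam_mul_pow n a (i : ℕ) i.isLt i, if_pos rfl, one_mul]
    · intro b _ hbne
      rw [gam_mul_pow n a (i : ℕ) i.isLt b, if_neg (fun hc => hbne (Fin.ext hc)), zero_mul]
    · intro h; exact absurd (Finset.mem_univ _) h
  show ∑ k, Qmat n a m ⟨(i : ℕ) + (j : ℕ), hij⟩ k * ξ k = _
  simp only [hrow]
  show (((Xi n a m)⁻¹ * companion n a ^ (j : ℕ)) *ᵥ ξ) i
      = ((Xi n a m)⁻¹ *ᵥ (companion n a ^ (j : ℕ) *ᵥ ξ)) i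
  rw [Matrix.mulVec_mulVec]
end

section
/- Let n ≥ 1, a ∈ ℝⁿ and m₁,…,m_{2n} ∈ ℝ, and assume Ξ(a) is invertible. Suppose Φ(a), regarded as a complex matrix, has n distinct eigenvalues λ₁,…,λₙ with corresponding nonzero eigenvectors v₁,…,vₙ ∈ ℂⁿ, and suppose ξ ∈ ℝⁿ satisfies (as a vector in ℂⁿ) ξ = Σ_{i=1}^{n} cᵢ vᵢ with cᵢ ≠ 0 for every i. Let Q ∈ ℝ^{2n×n} be the matrix whose j-th row is Qⱼ = Γ Ξ(a)^{−1} Φ(a)^{j−1} and set θ = Q ξ. Then the real Hankel matrix Θ(θ) is invertible. -/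
open Matrix

lemma map_pow' {n : ℕ} (M : Matrix (Fin n) (Fin n) ℝ) (k : ℕ) :
    (M ^ k).map (fun x => (x : ℂ)) = (M.map (fun x => (x : ℂ))) ^ k := by
  have hf : (fun x : ℝ => (x : ℂ)) = ⇑Complex.ofRealHom := rfl
  induction k with
  | zero => simp [Matrix.map_one]
  | succ k ih =>
      rw [pow_succ, pow_succ, ← ih, hf]
      exact Matrix.map_mul

lemma companion_eigvec {n : ℕ} (a : Fin n → ℝ) (lam : ℂ) (v : Fin n → ℂ)
    (h : (companion n a).map (fun x => (x : ℂ)) *ᵥ v = lam • v) (hn : 1 ≤ n) :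
    ∀ k : ℕ, ∀ hk : k < n, v ⟨k, hk⟩ = lam ^ k * v ⟨0, by omega⟩ := by
  intro k
  induction k with
  | zero => intro hk; simp
  | succ k ih =>
      intro hk
      have hk' : k < n := by omega
      have hrow := congrFun h ⟨k, hk'⟩
      have hne : k ≠ n - 1 := by omega
      have hL : ((companion n a).map (fun x => (x : ℂ)) *ᵥ v) ⟨k, hk'⟩ = v ⟨k+1, hk⟩ := by
        simp only [Matrix.mulVec, dotProduct, Matrix.map_apply, companion,
          Matrix.of_apply, hne, if_false]
        rw [Finset.sum_eq_single (⟨k+1, hk⟩ : Fin n)]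
        · simp
        · intro b _ hb
          have : (b : ℕ) ≠ k + 1 := by
            intro hbk; apply hb; exact Fin.ext hbk
          simp [this]
        · intro hmem; exact absurd (Finset.mem_univ _) hmem
      rw [hL] at hrow
      rw [hrow]
      simp only [Pi.smul_apply, smul_eq_mul, ih hk', pow_succ]
      ring

lemma sum_mulVec' {n N : ℕ} (M : Fin N → Matrix (Fin n) (Fin n) ℂ) (w : Fin n → ℂ) :
    (∑ j, M j) *ᵥ w = ∑ j, M j *ᵥ w := by
  funext r
  simp only [Matrix.mulVec, dotProduct, Matrix.sum_apply, Finset.sum_apply,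
    Finset.sum_mul]
  exact Finset.sum_comm

lemma eig_pow {n : ℕ} (A : Matrix (Fin n) (Fin n) ℂ) (lam : ℂ) (v : Fin n → ℂ)
    (h : A *ᵥ v = lam • v) (k : ℕ) : A ^ k *ᵥ v = lam ^ k • v := by
  induction k with
  | zero => simp
  | succ k ih =>
      rw [pow_succ, ← Matrix.mulVec_mulVec, h, Matrix.mulVec_smul, ih, pow_succ,
        smul_smul, mul_comm lam (lam ^ k)]

/-- if `Ξ(a)` is invertible, `Φ(a)` (as a complex matrix) has `n` distinct
eigenvalues with nonzero eigenvectors `vᵢ`, and `ξ ∈ ℝⁿ` satisfies `ξ = Σᵢ cᵢ vᵢ` in `ℂⁿ`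
with all `cᵢ ≠ 0`, then for `θ = Q ξ` the real Hankel matrix `Θ(θ)` is invertible. -/
theorem statement6 (n : ℕ) (hn : 1 ≤ n) (a : Fin n → ℝ) (m : Fin (2*n) → ℝ)
    (hXi : IsUnit (Xi n a m))
    (lam : Fin n → ℂ) (v : Fin n → Fin n → ℂ) (c : Fin n → ℂ)
    (hdist : Function.Injective lam)
    (heig : ∀ i, (companion n a).map (fun x => (x : ℂ)) *ᵥ v i = lam i • v i)
    (hv : ∀ i, v i ≠ 0)
    (hc : ∀ i, c i ≠ 0)
    (ξ : Fin n → ℝ)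
    (hξ : (fun i => (ξ i : ℂ)) = ∑ i, c i • v i) :
    IsUnit (hankel n (Qmat n a m *ᵥ ξ)) := by
  classical
  have hf : (fun x : ℝ => (x : ℂ)) = ⇑Complex.ofRealHom := rfl
  set A : Matrix (Fin n) (Fin n) ℂ := (companion n a).map (fun x => (x : ℂ)) with hA
  set Ξc : Matrix (Fin n) (Fin n) ℂ := (Xi n a m).map (fun x => (x : ℂ)) with hΞc
  -- determinant facts
  have hdetR : (Xi n a m).det ≠ 0 := by
    have := (Matrix.isUnit_iff_isUnit_det _).mp hXi
    exact isUnit_iff_ne_zero.mp this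
  have hdetC : Ξc.det ≠ 0 := by
    have : Ξc.det = ((Xi n a m).det : ℂ) := by
      rw [hΞc, hf]
      exact (RingHom.map_det Complex.ofRealHom _).symm
    rw [this]
    exact_mod_cast hdetR
  have hΞcUnit : IsUnit Ξc.det := isUnit_iff_ne_zero.mpr hdetC
  -- map of Xi
  have hmapXi : Ξc = A ^ (2*n) + ∑ j : Fin (2*n), (m j : ℂ) • A ^ (j : ℕ) := by
    rw [hΞc, Xi]
    ext i k
    simp only [Matrix.map_apply, Matrix.add_apply, Matrix.sum_apply, Matrix.smul_apply,
      smul_eq_mul, Complex.ofReal_add, Complex.ofReal_sum, Complex.ofReal_mul]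
    congr 1
    · exact congrFun (congrFun (map_pow' (companion n a) (2*n)) i) k
    · refine Finset.sum_congr rfl fun j _ => ?_
      congr 1
      exact congrFun (congrFun (map_pow' (companion n a) (j : ℕ)) i) k
  -- the polynomial P
  set P : ℂ → ℂ := fun x => x ^ (2*n) + ∑ j : Fin (2*n), (m j : ℂ) * x ^ (j : ℕ) with hPdef
  have hΞv : ∀ i, Ξc *ᵥ v i = P (lam i) • v i := by
    intro i
    rw [hmapXi, Matrix.add_mulVec, eig_pow A (lam i) (v i) (heig i)]
    have hsum : (∑ j : Fin (2*n), (m j : ℂ) • A ^ (j : ℕ)) *ᵥ v i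
        = ∑ j : Fin (2*n), ((m j : ℂ) * lam i ^ (j : ℕ)) • v i := by
      rw [sum_mulVec']
      refine Finset.sum_congr rfl fun j _ => ?_
      rw [Matrix.smul_mulVec, eig_pow A (lam i) (v i) (heig i), smul_smul]
    rw [hsum, hPdef]
    simp only [add_smul, Finset.sum_smul]
  have hΞinv : ∀ (w : Fin n → ℂ), Ξc⁻¹ *ᵥ (Ξc *ᵥ w) = w := by
    intro w
    rw [Matrix.mulVec_mulVec, Matrix.nonsing_inv_mul _ hΞcUnit, Matrix.one_mulVec]
  have hP : ∀ i, P (lam i) ≠ 0 := by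
    intro i hPi
    apply hv i
    have h0 : Ξc *ᵥ v i = 0 := by rw [hΞv i, hPi, zero_smul]
    have := hΞinv (v i)
    rw [h0, Matrix.mulVec_zero] at this
    exact this.symm
  have hΞinv_v : ∀ i, Ξc⁻¹ *ᵥ v i = (P (lam i))⁻¹ • v i := by
    intro i
    have h1 : Ξc *ᵥ ((P (lam i))⁻¹ • v i) = v i := by
      rw [Matrix.mulVec_smul, hΞv i, smul_smul, inv_mul_cancel₀ (hP i), one_smul]
    have := hΞinv ((P (lam i))⁻¹ • v i)
    rw [h1] at this
    exact this
  -- first coordinates of eigenvectors are nonzero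
  have h0lt : 0 < n := hn
  have hv0 : ∀ i, v i ⟨0, h0lt⟩ ≠ 0 := by
    intro i h0
    apply hv i
    funext j
    have := companion_eigvec a (lam i) (v i) (heig i) hn (j : ℕ) j.isLt
    rw [Fin.eta] at this
    rw [this, h0, mul_zero]
    rfl
  -- the coefficients d
  set d : Fin n → ℂ := fun i => c i * (P (lam i))⁻¹ * v i ⟨0, h0lt⟩ with hd
  have hdne : ∀ i, d i ≠ 0 := fun i =>
    mul_ne_zero (mul_ne_zero (hc i) (inv_ne_zero (hP i))) (hv0 i)
  -- inverse commutes with map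
  have hinvmap : ((Xi n a m)⁻¹).map (fun x => (x : ℂ)) = Ξc⁻¹ := by
    have hleft : (((Xi n a m)⁻¹).map (fun x => (x : ℂ))) * Ξc = 1 := by
      rw [hΞc, hf, ← Matrix.map_mul, Matrix.nonsing_inv_mul _ (isUnit_iff_ne_zero.mpr hdetR)]
      exact Matrix.map_one _ (map_zero _) (map_one _)
    exact (Matrix.inv_eq_left_inv hleft).symm
  -- formula for θ
  set θ : Fin (2*n) → ℝ := Qmat n a m *ᵥ ξ with hθdef
  have hθ : ∀ k : Fin (2*n), (θ k : ℂ) = ∑ i, d i * lam i ^ (k : ℕ) := by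
    intro k
    have h1 : (θ k : ℂ)
        = (((Gam n * (Xi n a m)⁻¹ * companion n a ^ (k : ℕ)).map (fun x => (x : ℂ)))
            *ᵥ (fun l => (ξ l : ℂ))) 0 := by
      rw [hθdef]
      simp only [Matrix.mulVec, dotProduct, Qmat, Matrix.of_apply, Matrix.map_apply]
      push_cast
      rfl
    have h2 : (Gam n * (Xi n a m)⁻¹ * companion n a ^ (k : ℕ)).map (fun x => (x : ℂ))
        = (Gam n).map (fun x => (x : ℂ)) * Ξc⁻¹ * A ^ (k : ℕ) := by
      rw [hf] at hinvmap ⊢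
      rw [Matrix.map_mul, Matrix.map_mul, hinvmap, ← hf, map_pow', hA]
    rw [h1, h2]
    have h3 : (fun l => (ξ l : ℂ)) = ∑ i, c i • v i := hξ
    rw [← Matrix.mulVec_mulVec, ← Matrix.mulVec_mulVec, h3]
    have h4 : A ^ (k : ℕ) *ᵥ (∑ i, c i • v i) = ∑ i, (c i * lam i ^ (k : ℕ)) • v i := by
      have := map_sum ((A ^ (k : ℕ)).mulVecLin) (fun i => c i • v i) Finset.univ
      simp only [Matrix.mulVecLin_apply] at this
      rw [this]
      refine Finset.sum_congr rfl fun i _ => ?_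
      rw [Matrix.mulVec_smul, eig_pow A (lam i) (v i) (heig i) (k : ℕ), smul_smul]
    rw [h4]
    have h5 : Ξc⁻¹ *ᵥ (∑ i, (c i * lam i ^ (k : ℕ)) • v i)
        = ∑ i, ((c i * lam i ^ (k : ℕ)) * (P (lam i))⁻¹) • v i := by
      have := map_sum (Ξc⁻¹.mulVecLin) (fun i => (c i * lam i ^ (k : ℕ)) • v i) Finset.univ
      simp only [Matrix.mulVecLin_apply] at this
      rw [this]
      refine Finset.sum_congr rfl fun i _ => ?_
      rw [Matrix.mulVec_smul, hΞinv_v i, smul_smul]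
    rw [h5]
    have h6 : ∀ (w : Fin n → ℂ),
        ((Gam n).map (fun x => (x : ℂ)) *ᵥ w) 0 = w ⟨0, h0lt⟩ := by
      intro w
      simp only [Matrix.mulVec, dotProduct, Gam, Matrix.map_apply, Matrix.of_apply]
      rw [Finset.sum_eq_single (⟨0, h0lt⟩ : Fin n)]
      · simp
      · intro b _ hb
        have : (b : ℕ) ≠ 0 := fun hb0 => hb (Fin.ext hb0)
        simp [this]
      · intro hmem; exact absurd (Finset.mem_univ _) hmem
    rw [h6]
    simp only [Finset.sum_apply, Pi.smul_apply, smul_eq_mul, hd]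
    refine Finset.sum_congr rfl fun i _ => ?_
    ring
  -- factor the complexified Hankel matrix
  have hH : (hankel n θ).map (fun x => (x : ℂ))
      = (Matrix.vandermonde lam)ᵀ * (Matrix.diagonal d * Matrix.vandermonde lam) := by
    ext i j
    rw [Matrix.mul_apply]
    simp only [Matrix.transpose_apply, Matrix.diagonal_mul, Matrix.vandermonde,
      Matrix.of_apply, Matrix.map_apply, hankel]
    rw [hθ]
    refine Finset.sum_congr rfl fun l _ => ?_
    rw [pow_add]
    ring
  -- conclude
  have hdetH : ((hankel n θ).det : ℂ) ≠ 0 := by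
    have : ((hankel n θ).det : ℂ) = ((hankel n θ).map (fun x => (x : ℂ))).det := by
      rw [hf]; exact RingHom.map_det Complex.ofRealHom _
    rw [this, hH, Matrix.det_mul, Matrix.det_mul, Matrix.det_transpose,
      Matrix.det_diagonal, Matrix.det_vandermonde]
    have hvdm : ∏ i : Fin n, ∏ j ∈ Finset.Ioi i, (lam j - lam i) ≠ 0 := by
      refine Finset.prod_ne_zero_iff.mpr fun i _ => Finset.prod_ne_zero_iff.mpr fun j hj => ?_
      have hij : i < j := Finset.mem_Ioi.mp hj
      exact sub_ne_zero_of_ne fun h => absurd (hdist h.symm) (ne_of_lt hij)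
    exact mul_ne_zero hvdm (mul_ne_zero
      (Finset.prod_ne_zero_iff.mpr fun i _ => hdne i) hvdm)
  have : (hankel n θ).det ≠ 0 := fun h => hdetH (by rw [h]; exact Complex.ofReal_zero)
  exact (Matrix.isUnit_iff_isUnit_det _).mpr (isUnit_iff_ne_zero.mpr this)
end

section
/- Let n ≥ 1, a ∈ ℝⁿ and m₁,…,m_{2n} ∈ ℝ, and assume Ξ(a) is invertible. Let Q ∈ ℝ^{2n×n} be the matrix whose j-th row is Qⱼ = Γ Ξ(a)^{−1} Φ(a)^{j−1}; for ξ ∈ ℝⁿ set θ = Q ξ. Then for every 1 ≤ j ≤ n, θ_{n+j} = −(a₁ θⱼ + a₂ θ_{j+1} + ⋯ + aₙ θ_{n+j−1}); equivalently, the Hankel matrix Θ(θ) satisfies Θ(θ) a + (θ_{n+1},…,θ_{2n})ᵀ = 0. -/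
open Matrix

lemma companion_row_mid (n : ℕ) (a : Fin n → ℝ) (i : Fin n) (h : (i : ℕ) + 1 < n) :
    companion n a i = Pi.single (⟨(i : ℕ) + 1, h⟩ : Fin n) 1 := by
  funext j
  have hi : (i : ℕ) ≠ n - 1 := by omega
  simp only [companion, Matrix.of_apply, if_neg hi, Pi.single_apply]
  by_cases hj : (j : ℕ) = (i : ℕ) + 1
  · rw [if_pos hj, if_pos (by exact Fin.ext hj)]
  · rw [if_neg hj, if_neg (by intro hc; exact hj (by rw [hc]))]

lemma companion_row_last (n : ℕ) (a : Fin n → ℝ) (i : Fin n) (h : (i : ℕ) = n - 1) :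
    companion n a i = fun j => -a j := by
  funext j; simp [companion, h]

lemma e0_vecMul_pow (n : ℕ) (hn : 1 ≤ n) (a : Fin n → ℝ) :
    ∀ k (hk : k < n),
      Pi.single (⟨0, hn⟩ : Fin n) (1:ℝ) ᵥ* (companion n a) ^ k = Pi.single ⟨k, hk⟩ 1 := by
  intro k
  induction k with
  | zero => intro hk; simp [Matrix.vecMul_one]
  | succ k ih =>
    intro hk
    rw [pow_succ, ← Matrix.vecMul_vecMul, ih (by omega), Matrix.single_one_vecMul, Matrix.row_apply',
      companion_row_mid n a ⟨k, by omega⟩ hk]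

lemma e0_vecMul_pow_n (n : ℕ) (hn : 1 ≤ n) (a : Fin n → ℝ) :
    Pi.single (⟨0, hn⟩ : Fin n) (1:ℝ) ᵥ* (companion n a) ^ n = fun j => -a j := by
  rw [show (companion n a) ^ n = (companion n a) ^ (n-1) * companion n a by
      rw [← pow_succ]; congr 1; omega,
    ← Matrix.vecMul_vecMul, e0_vecMul_pow n hn a (n-1) (by omega),
    Matrix.single_one_vecMul, Matrix.row_apply', companion_row_last n a ⟨n-1, by omega⟩ rfl]

/-- Cayley–Hamilton for the companion matrix, proved directly. -/
lemma companion_CH (n : ℕ) (hn : 1 ≤ n) (a : Fin n → ℝ) :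
    (companion n a) ^ n + ∑ k : Fin n, a k • (companion n a) ^ (k : ℕ) = 0 := by
  set Φ := companion n a with hΦ
  set C : Matrix (Fin n) (Fin n) ℝ := Φ ^ n + ∑ k : Fin n, a k • Φ ^ (k : ℕ) with hC
  have hcomm : ∀ i : ℕ, C * Φ ^ i = Φ ^ i * C := by
    intro i
    rw [hC, add_mul, mul_add, Finset.sum_mul, Finset.mul_sum]
    congr 1
    · rw [← pow_add, ← pow_add, Nat.add_comm]
    · refine Finset.sum_congr rfl fun k _ => ?_
      rw [smul_mul_assoc, mul_smul_comm, ← pow_add, ← pow_add, Nat.add_comm]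
  have hrow0 : ∀ k (hk : k < n), (Φ ^ k) ⟨0, hn⟩ = Pi.single (⟨k, hk⟩ : Fin n) (1:ℝ) := by
    intro k hk
    rw [← Matrix.row_apply' (Φ ^ k) ⟨0, hn⟩, ← Matrix.single_one_vecMul (⟨0, hn⟩ : Fin n) (Φ ^ k), e0_vecMul_pow n hn a k hk]
  have he0 : Pi.single (⟨0, hn⟩ : Fin n) (1:ℝ) ᵥ* C = 0 := by
    rw [Matrix.single_one_vecMul, Matrix.row_apply']
    funext j
    have hnrow : (Φ ^ n) ⟨0, hn⟩ j = -a j := congrFun (e0_vecMul_pow_n n hn a ▸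
      (Matrix.single_one_vecMul (⟨0, hn⟩ : Fin n) (Φ ^ n)).symm) j
    simp only [hC, Matrix.add_apply, Matrix.sum_apply, Matrix.smul_apply, smul_eq_mul,
      Pi.zero_apply]
    rw [hnrow]
    have : ∀ k : Fin n, (Φ ^ (k : ℕ)) ⟨0, hn⟩ j = if j = k then 1 else 0 := by
      intro k
      rw [hrow0 k k.is_lt]
      simp [Pi.single_apply, Fin.ext_iff]
    simp [this]
  have hrow : ∀ i : Fin n, C i = 0 := by
    intro i
    have h1 : Pi.single i (1:ℝ) ᵥ* C = 0 := by
      rw [← e0_vecMul_pow n hn a i i.is_lt, Matrix.vecMul_vecMul, ← hcomm,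
        ← Matrix.vecMul_vecMul, he0, Matrix.zero_vecMul]
    rw [Matrix.single_one_vecMul] at h1
    exact h1
  funext i j
  simpa using congrFun (hrow i) j

/-- for `θ = Q ξ`, every `1 ≤ j ≤ n` satisfies
`θ_{n+j} = −(a₁ θⱼ + a₂ θ_{j+1} + ⋯ + aₙ θ_{n+j−1})`; equivalently
`Θ(θ) a + (θ_{n+1}, …, θ_{2n})ᵀ = 0`. -/
theorem statement8 (n : ℕ) (hn : 1 ≤ n) (a : Fin n → ℝ) (m : Fin (2*n) → ℝ)
    (hXi : IsUnit (Xi n a m)) (ξ : Fin n → ℝ) (θ : Fin (2*n) → ℝ)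
    (hθ : θ = Qmat n a m *ᵥ ξ) :
    (∀ j : Fin n, θ ⟨n + (j : ℕ), by omega⟩ =
      -∑ k : Fin n, a k * θ ⟨(j : ℕ) + (k : ℕ), by omega⟩) ∧
    hankel n θ *ᵥ a + (fun j : Fin n => θ ⟨n + (j : ℕ), by omega⟩) = 0 := by
  set Φ := companion n a with hΦ
  set B := Gam n * (Xi n a m)⁻¹ with hB
  have hpow : Φ ^ n = -∑ k : Fin n, a k • Φ ^ (k : ℕ) :=
    eq_neg_of_add_eq_zero_left (companion_CH n hn a)
  have key : ∀ j : Fin n, B * Φ ^ (n + (j : ℕ)) =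
      -∑ l : Fin n, a l • (B * Φ ^ ((j : ℕ) + (l : ℕ))) := by
    intro j
    rw [show n + (j : ℕ) = (j : ℕ) + n from Nat.add_comm _ _, pow_add, ← Matrix.mul_assoc,
      hpow, Matrix.mul_neg, Matrix.mul_sum]
    congr 1
    refine Finset.sum_congr rfl fun l _ => ?_
    rw [Matrix.mul_smul, Matrix.mul_assoc, ← pow_add]
  have hθ' : ∀ i : Fin (2*n), θ i = ∑ k : Fin n, (B * Φ ^ (i : ℕ)) 0 k * ξ k := by
    intro i
    rw [hθ]
    simp [Qmat, Matrix.mulVec, dotProduct, hB, hΦ]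
  have first : ∀ j : Fin n, θ ⟨n + (j : ℕ), by omega⟩ =
      -∑ k : Fin n, a k * θ ⟨(j : ℕ) + (k : ℕ), by omega⟩ := by
    intro j
    rw [hθ']
    simp only [hθ']
    rw [key j]
    simp only [Matrix.neg_apply, Matrix.sum_apply, Matrix.smul_apply, smul_eq_mul, neg_mul,
      Finset.sum_neg_distrib, Finset.sum_mul, Finset.mul_sum, neg_inj]
    rw [Finset.sum_comm]
    exact Finset.sum_congr rfl fun y _ => Finset.sum_congr rfl fun x _ => by ring
  refine ⟨first, ?_⟩
  funext j
  simp only [Pi.add_apply, Matrix.mulVec, dotProduct, hankel, Matrix.of_apply,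
    Pi.zero_apply]
  rw [first j]
  have hcm : ∑ k : Fin n, θ ⟨(j : ℕ) + (k : ℕ), by omega⟩ * a k =
      ∑ k : Fin n, a k * θ ⟨(j : ℕ) + (k : ℕ), by omega⟩ :=
    Finset.sum_congr rfl fun k _ => mul_comm _ _
  rw [hcm]
  ring
end

section
/- Let A be an n×n real matrix such that every complex eigenvalue of A (every root of its characteristic polynomial over ℂ) has strictly negative real part, and let d : [0,∞) → ℝⁿ be a continuous function for which there exist constants c > 0 and α > 0 with ‖d(t)‖ ≤ c e^{−α t} for all t ≥ 0. Then every differentiable function x : [0,∞) → ℝⁿ satisfying x′(t) = A x(t) + d(t) for all t ≥ 0 converges to zero exponentially: there exist constants C > 0 and β > 0 such that ‖x(t)‖ ≤ C e^{−β t} for all t ≥ 0. -/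
open Matrix Polynomial Set


lemma charpoly_eval_eq {m : ℕ} (M : Matrix (Fin m) (Fin m) ℂ) (μ : ℂ) :
    M.charpoly.eval μ = (μ • (1 : Matrix (Fin m) (Fin m) ℂ) - M).det := by
  rw [Matrix.charpoly, ← Polynomial.coe_evalRingHom, RingHom.map_det]
  congr 1
  ext i j
  simp [Matrix.charmatrix_apply, Matrix.one_apply, Matrix.smul_apply, Matrix.sub_apply, Matrix.diagonal_apply, apply_ite (Polynomial.eval μ)]

lemma isRoot_charpoly_iff {m : ℕ} (M : Matrix (Fin m) (Fin m) ℂ) (μ : ℂ) :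
    M.charpoly.IsRoot μ ↔ ∃ v : Fin m → ℂ, v ≠ 0 ∧ M *ᵥ v = μ • v := by
  rw [Polynomial.IsRoot, charpoly_eval_eq, ← Matrix.exists_mulVec_eq_zero_iff]
  constructor
  · rintro ⟨v, hv, hMv⟩
    refine ⟨v, hv, ?_⟩
    have := hMv
    rw [Matrix.sub_mulVec, Matrix.smul_mulVec, Matrix.one_mulVec, sub_eq_zero] at this
    exact this.symm
  · rintro ⟨v, hv, hMv⟩
    refine ⟨v, hv, ?_⟩
    rw [Matrix.sub_mulVec, Matrix.smul_mulVec, Matrix.one_mulVec, sub_eq_zero, hMv]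

lemma exists_root_charpoly {m : ℕ} (M : Matrix (Fin (m+1)) (Fin (m+1)) ℂ) :
    ∃ μ : ℂ, M.charpoly.IsRoot μ := by
  have hdeg : M.charpoly.degree = (m+1 : ℕ) := by
    simpa using M.charpoly_degree_eq_dim
  have : M.charpoly.degree ≠ 0 := by rw [hdeg]; exact_mod_cast (by simp)
  obtain ⟨μ, hμ⟩ := Complex.exists_root (by rw [hdeg]; exact_mod_cast Nat.succ_pos m)
  exact ⟨μ, hμ⟩

lemma scalar_decay (lam : ℂ) (c α β : ℝ)
    (hβ0 : 0 < β) (hβα : β < α) (hbl : β ≤ -lam.re)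
    (g : ℝ → ℂ) (hg : ContinuousOn g (Set.Ici 0))
    (hgb : ∀ t ≥ (0:ℝ), ‖g t‖ ≤ c * Real.exp (-α * t))
    (y : ℝ → ℂ) (hy : ∀ t ≥ (0:ℝ), HasDerivWithinAt y (lam * y t + g t) (Set.Ici 0) t) :
    ∀ t ≥ (0:ℝ), ‖y t‖ ≤ (‖y 0‖ + c / (α - β)) * Real.exp (-β * t) := by
  have hc0 : 0 ≤ c := le_trans (norm_nonneg (g 0)) (by simpa using hgb 0 le_rfl)
  -- the integrating factor
  set w : ℝ → ℂ := fun t => Complex.exp (-(lam * t)) * y t with hw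
  have hexp : ∀ t : ℝ, HasDerivAt (fun s : ℝ => Complex.exp (-(lam * s)))
      (Complex.exp (-(lam * t)) * (-lam)) t := by
    intro t
    have h1 : HasDerivAt (fun s : ℝ => -(lam * (s:ℂ))) (-lam) t := by
      have := (Complex.ofRealCLM.hasDerivAt (x := t)).const_mul lam
      have h2 := this.neg
      simp at h2
      exact h2
    simpa using h1.cexp
  have hw' : ∀ t ≥ (0:ℝ), HasDerivWithinAt w (Complex.exp (-(lam * t)) * g t) (Set.Ici 0) t := by
    intro t ht
    have := ((hexp t).hasDerivWithinAt (s := Set.Ici 0)).mul (hy t ht)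
    have heq : Complex.exp (-(lam * t)) * (-lam) * y t
        + Complex.exp (-(lam * t)) * (lam * y t + g t)
        = Complex.exp (-(lam * t)) * g t := by ring
    rw [← heq]
    exact this
  have ycont : ContinuousOn y (Set.Ici 0) := fun t ht => (hy t ht).continuousWithinAt
  have wcont : ContinuousOn w (Set.Ici 0) :=
    (Complex.continuous_exp.comp (by continuity : Continuous fun s : ℝ => -(lam * s))).continuousOn.mul ycont
  intro t ht
  -- FTC
  have hFTC : ∫ s in (0:ℝ)..t, Complex.exp (-(lam * s)) * g s = w t - w 0 := by
    apply intervalIntegral.integral_eq_sub_of_hasDeriv_right_of_le ht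
      (wcont.mono (Set.Icc_subset_Ici_self))
    · intro s hs
      exact (hw' s (le_of_lt hs.1)).mono (Set.Ioi_subset_Ici hs.1.le)
    · apply ContinuousOn.intervalIntegrable
      rw [Set.uIcc_of_le ht]
      exact ((Complex.continuous_exp.comp (by continuity : Continuous fun s : ℝ => -(lam * s))).continuousOn.mul
        (hg.mono Set.Icc_subset_Ici_self))
  have hw0 : w 0 = y 0 := by simp [hw]
  -- norm bound on w t
  have hnorm_exp : ∀ s : ℝ, ‖Complex.exp (-(lam * s))‖ = Real.exp (-lam.re * s) := by
    intro s
    rw [Complex.norm_exp]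
    norm_num
  have hIb : ‖∫ s in (0:ℝ)..t, Complex.exp (-(lam * s)) * g s‖
      ≤ ∫ s in (0:ℝ)..t, c * Real.exp ((-lam.re - α) * s) := by
    refine (intervalIntegral.norm_integral_le_integral_norm ht).trans ?_
    apply intervalIntegral.integral_mono_on ht
    · apply ContinuousOn.intervalIntegrable
      rw [Set.uIcc_of_le ht]
      exact ((Complex.continuous_exp.comp (by continuity : Continuous fun s : ℝ => -(lam * s))).continuousOn.mul
        (hg.mono Set.Icc_subset_Ici_self)).norm
    · apply Continuous.intervalIntegrable; continuity
    · intro s hs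
      rw [norm_mul, hnorm_exp]
      calc Real.exp (-lam.re * s) * ‖g s‖ ≤ Real.exp (-lam.re * s) * (c * Real.exp (-α * s)) := by
            exact mul_le_mul_of_nonneg_left (hgb s hs.1) (Real.exp_nonneg _)
        _ = c * Real.exp ((-lam.re - α) * s) := by
            rw [mul_comm, mul_assoc, ← Real.exp_add]; ring_nf
  -- bound w and transfer to y
  have hwt : ‖w t‖ ≤ ‖y 0‖ + ∫ s in (0:ℝ)..t, c * Real.exp ((-lam.re - α) * s) := by
    have : w t = w 0 + ∫ s in (0:ℝ)..t, Complex.exp (-(lam * s)) * g s := by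
      rw [hFTC]; ring
    rw [this, hw0]
    exact (norm_add_le _ _).trans (add_le_add le_rfl hIb)
  have hyt : y t = Complex.exp (lam * t) * w t := by
    show y t = Complex.exp (lam * t) * (Complex.exp (-(lam * t)) * y t)
    rw [← mul_assoc, ← Complex.exp_add]
    norm_num
  have hyn : ‖y t‖ = Real.exp (lam.re * t) * ‖w t‖ := by
    rw [hyt, norm_mul, Complex.norm_exp]
    norm_num
  have hk : β - α < 0 := by linarith
  -- exact value of the comparison integral
  have hIval : ∫ s in (0:ℝ)..t, Real.exp ((β - α) * s)
      = (Real.exp ((β - α) * t) - 1) / (β - α) := by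
    have hder : ∀ s ∈ Set.uIcc (0:ℝ) t, HasDerivAt (fun u => Real.exp ((β - α) * u) / (β - α))
        (Real.exp ((β - α) * s)) s := by
      intro s _
      have h1 : HasDerivAt (fun u : ℝ => (β - α) * u) (β - α) s := by
        simpa using (hasDerivAt_id s).const_mul (β - α)
      have := (h1.exp).div_const (β - α)
      rw [mul_div_assoc, div_self (show (β - α : ℝ) ≠ 0 by linarith), mul_one] at this
      exact this
    have := intervalIntegral.integral_eq_sub_of_hasDerivAt hder
      (by apply Continuous.intervalIntegrable; fun_prop)
    rw [this]
    simp [sub_div]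
  have hI2 : Real.exp (lam.re * t) * (∫ s in (0:ℝ)..t, c * Real.exp ((-lam.re - α) * s))
      ≤ (c / (α - β)) * Real.exp (-β * t) := by
    rw [← intervalIntegral.integral_const_mul]
    have hmono : ∫ s in (0:ℝ)..t, Real.exp (lam.re * t) * (c * Real.exp ((-lam.re - α) * s))
        ≤ ∫ s in (0:ℝ)..t, c * Real.exp (-β * t) * Real.exp ((β - α) * s) := by
      apply intervalIntegral.integral_mono_on ht
      · apply Continuous.intervalIntegrable; fun_prop
      · apply Continuous.intervalIntegrable; fun_prop
      · intro s hs
        have hexp_le : Real.exp (lam.re * t) * Real.exp ((-lam.re - α) * s)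
            ≤ Real.exp (-β * t) * Real.exp ((β - α) * s) := by
          rw [← Real.exp_add, ← Real.exp_add]
          apply Real.exp_le_exp.mpr
          nlinarith [hs.1, hs.2, hbl]
        calc Real.exp (lam.re * t) * (c * Real.exp ((-lam.re - α) * s))
            = c * (Real.exp (lam.re * t) * Real.exp ((-lam.re - α) * s)) := by ring
          _ ≤ c * (Real.exp (-β * t) * Real.exp ((β - α) * s)) :=
              mul_le_mul_of_nonneg_left hexp_le hc0
          _ = c * Real.exp (-β * t) * Real.exp ((β - α) * s) := by ring
    refine hmono.trans ?_
    rw [intervalIntegral.integral_const_mul, hIval]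
    have hαβ : 0 < α - β := by linarith
    have h1 : (Real.exp ((β - α) * t) - 1) / (β - α) ≤ 1 / (α - β) := by
      have heq2 : (Real.exp ((β - α) * t) - 1) / (β - α)
          = (1 - Real.exp ((β - α) * t)) / (α - β) := by
        rw [div_eq_div_iff (by linarith : (β - α : ℝ) ≠ 0) (ne_of_gt hαβ)]
        ring
      rw [heq2]
      apply div_le_div_of_nonneg_right _ (le_of_lt hαβ) |>.trans_eq rfl
      linarith [Real.exp_nonneg ((β - α) * t)]
    calc c * Real.exp (-β * t) * ((Real.exp ((β - α) * t) - 1) / (β - α))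
        ≤ c * Real.exp (-β * t) * (1 / (α - β)) := by
          apply mul_le_mul_of_nonneg_left h1 (by positivity)
      _ = (c / (α - β)) * Real.exp (-β * t) := by ring
  have hterm1 : Real.exp (lam.re * t) * ‖y 0‖ ≤ ‖y 0‖ * Real.exp (-β * t) := by
    rw [mul_comm]
    apply mul_le_mul_of_nonneg_left _ (norm_nonneg _)
    apply Real.exp_le_exp.mpr
    nlinarith [hbl]
  calc ‖y t‖ = Real.exp (lam.re * t) * ‖w t‖ := hyn
    _ ≤ Real.exp (lam.re * t) * (‖y 0‖ + ∫ s in (0:ℝ)..t, c * Real.exp ((-lam.re - α) * s)) :=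
        mul_le_mul_of_nonneg_left hwt (Real.exp_nonneg _)
    _ = Real.exp (lam.re * t) * ‖y 0‖
        + Real.exp (lam.re * t) * ∫ s in (0:ℝ)..t, c * Real.exp ((-lam.re - α) * s) := by ring
    _ ≤ ‖y 0‖ * Real.exp (-β * t) + (c / (α - β)) * Real.exp (-β * t) := add_le_add hterm1 hI2
    _ = (‖y 0‖ + c / (α - β)) * Real.exp (-β * t) := by ring


-- derivative of linear combination of coordinates
lemma deriv_lincomb {k : ℕ} (z : ℝ → Fin k → ℂ) (z' : Fin k → ℂ) (M : Fin k → ℂ) (t : ℝ)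
    (hz : ∀ j, HasDerivWithinAt (fun s => z s j) (z' j) (Set.Ici 0) t) :
    HasDerivWithinAt (fun s => ∑ j, M j * z s j) (∑ j, M j * z' j) (Set.Ici 0) t :=
  HasDerivWithinAt.fun_sum fun j _ => (hz j).const_mul (M j)

-- existence of invertible matrix with prescribed nonzero first column
lemma exists_invertible_col {m : ℕ} (v : Fin (m+1) → ℂ) (hv : v ≠ 0) :
    ∃ P Q : Matrix (Fin (m+1)) (Fin (m+1)) ℂ, Q * P = 1 ∧ P * Q = 1 ∧ (∀ i, P i 0 = v i) := by
  have hli : LinearIndepOn ℂ id ({v} : Set (Fin (m+1) → ℂ)) :=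
    (linearIndepOn_singleton_iff ℂ).mpr hv
  let bb0 := Module.Basis.extend hli
  have : FiniteDimensional ℂ (Fin (m+1) → ℂ) := by infer_instance
  let e : _ ≃ Fin (m+1) := bb0.indexEquiv (Pi.basisFun ℂ (Fin (m+1)))
  have hvmem : v ∈ hli.extend (Set.subset_univ _) :=
    hli.subset_extend _ (Set.mem_singleton v)
  let i₀ : ↥(hli.extend (Set.subset_univ _)) := ⟨v, hvmem⟩
  let e' := e.trans (Equiv.swap (e i₀) 0)
  let bb := bb0.reindex e'
  have hbb0 : bb 0 = v := by
    have h1 : e'.symm 0 = i₀ := by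
      simp only [e', Equiv.symm_trans_apply, Equiv.symm_swap, Equiv.swap_apply_right]
      exact e.symm_apply_apply i₀
    rw [show bb 0 = bb0 (e'.symm 0) from bb0.reindex_apply e' 0, h1]
    exact Module.Basis.extend_apply_self hli i₀
  let P := (Pi.basisFun ℂ (Fin (m+1))).toMatrix ⇑bb
  have hPapp : ∀ i j, P i j = bb j i := by
    intro i j
    simp [P, Module.Basis.toMatrix_apply]
  have : Invertible P := (Pi.basisFun ℂ (Fin (m+1))).invertibleToMatrix bb
  refine ⟨P, ⅟P, invOf_mul_self P, mul_invOf_self P, fun i => ?_⟩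
  rw [hPapp, hbb0]

set_option maxHeartbeats 2000000 in
lemma vec_decay (m : ℕ) (B : Matrix (Fin m) (Fin m) ℂ)
    (hB : ∀ μ : ℂ, B.charpoly.IsRoot μ → μ.re < 0)
    (g : ℝ → Fin m → ℂ) (hg : ∀ i, ContinuousOn (fun t => g t i) (Set.Ici 0))
    (c α : ℝ) (hα : 0 < α)
    (hgb : ∀ t ≥ (0:ℝ), ∀ i, ‖g t i‖ ≤ c * Real.exp (-α * t))
    (z : ℝ → Fin m → ℂ)
    (hz : ∀ i, ∀ t ≥ (0:ℝ), HasDerivWithinAt (fun s => z s i) ((B *ᵥ z t) i + g t i) (Set.Ici 0) t) :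
    ∃ C > (0:ℝ), ∃ β > (0:ℝ), β < α ∧ ∀ t ≥ (0:ℝ), ∀ i, ‖z t i‖ ≤ C * Real.exp (-β * t) := by
  induction m generalizing c α with
  | zero =>
    exact ⟨1, one_pos, α/2, by linarith, by linarith, fun t ht i => i.elim0⟩
  | succ m ih =>
    have hc0 : 0 ≤ c := le_trans (norm_nonneg (g 0 0)) (by simpa using hgb 0 le_rfl 0)
    -- eigenvalue and eigenvector
    obtain ⟨μ, hμroot⟩ := exists_root_charpoly B
    have hμre : μ.re < 0 := hB μ hμroot
    obtain ⟨v, hv0, hvec⟩ := (isRoot_charpoly_iff B μ).mp hμroot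
    obtain ⟨P, Q, hQP, hPQ, hPcol⟩ := exists_invertible_col v hv0
    set B'' : Matrix (Fin (m+1)) (Fin (m+1)) ℂ := Q * B * P with hB''
    -- column structure of B''
    have hPsing : P *ᵥ Pi.single 0 1 = v := by
      ext i
      simp [Matrix.mulVec_single, hPcol]
    have hQv : Q *ᵥ v = Pi.single 0 1 := by
      rw [← hPsing, Matrix.mulVec_mulVec, hQP, Matrix.one_mulVec]
    have hcol : ∀ i, B'' i 0 = if i = 0 then μ else 0 := by
      have h1 : B'' *ᵥ Pi.single 0 1 = μ • (Pi.single 0 1 : Fin (m+1) → ℂ) := by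
        rw [hB'', ← Matrix.mulVec_mulVec, hPsing, ← Matrix.mulVec_mulVec, hvec,
          Matrix.mulVec_smul, hQv]
      intro i
      have := congrFun h1 i
      simpa [Matrix.mulVec_single, Pi.single_apply] using this
    -- Hurwitz property of the submatrix
    set Bsub := B''.submatrix Fin.succ Fin.succ with hBsub
    have hsubHur : ∀ ν : ℂ, Bsub.charpoly.IsRoot ν → ν.re < 0 := by
      intro ν hν
      obtain ⟨u, hu0, huvec⟩ := (isRoot_charpoly_iff Bsub ν).mp hν
      by_cases hνμ : ν = μ
      · rwa [hνμ]
      have hsubne : ν - μ ≠ 0 := sub_ne_zero.mpr hνμ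
      set a : ℂ := (∑ j, B'' 0 (Fin.succ j) * u j) / (ν - μ) with hadef
      set vv : Fin (m+1) → ℂ := Fin.cons a u with hvvdef
      have hvv : B'' *ᵥ vv = ν • vv := by
        funext i
        refine Fin.cases ?_ ?_ i
        · have hlhs : (B'' *ᵥ vv) 0 = μ * a + ∑ j, B'' 0 (Fin.succ j) * u j := by
            simp [Matrix.mulVec, dotProduct, Fin.sum_univ_succ, hvvdef, hcol 0]
          rw [hlhs]
          show μ * a + ∑ j, B'' 0 (Fin.succ j) * u j = ν * vv 0
          rw [hvvdef]
          simp only [Fin.cons_zero]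
          rw [hadef]
          field_simp
          ring
        · intro k
          have hlhs : (B'' *ᵥ vv) (Fin.succ k) = (Bsub *ᵥ u) k := by
            simp [Matrix.mulVec, dotProduct, Fin.sum_univ_succ, hvvdef,
              hcol (Fin.succ k), Fin.succ_ne_zero, hBsub, Matrix.submatrix_apply]
          rw [hlhs, huvec]
          simp [hvvdef]
      have hvv0 : vv ≠ 0 := by
        intro hcontra
        apply hu0
        funext k
        have := congrFun hcontra (Fin.succ k)
        simpa [hvvdef] using this
      have hBP : B * P = P * B'' := by
        rw [hB'', ← Matrix.mul_assoc, ← Matrix.mul_assoc, hPQ, Matrix.one_mul]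
      have heig : B *ᵥ (P *ᵥ vv) = ν • (P *ᵥ vv) := by
        rw [Matrix.mulVec_mulVec, hBP, ← Matrix.mulVec_mulVec, hvv, Matrix.mulVec_smul]
      have hPvv0 : P *ᵥ vv ≠ 0 := by
        intro hcontra
        apply hvv0
        have : Q *ᵥ (P *ᵥ vv) = 0 := by rw [hcontra, Matrix.mulVec_zero]
        rwa [Matrix.mulVec_mulVec, hQP, Matrix.one_mulVec] at this
      exact hB ν ((isRoot_charpoly_iff B ν).mpr ⟨P *ᵥ vv, hPvv0, heig⟩)
    -- transformed system
    set w : ℝ → Fin (m+1) → ℂ := fun t => Q *ᵥ z t with hwdef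
    set h : ℝ → Fin (m+1) → ℂ := fun t => Q *ᵥ g t with hhdef
    have hQB : Q * B = B'' * Q := by
      rw [hB'']; rw [Matrix.mul_assoc, Matrix.mul_assoc, hPQ, Matrix.mul_one]
    have hw : ∀ i, ∀ t ≥ (0:ℝ), HasDerivWithinAt (fun s => w s i)
        ((B'' *ᵥ w t) i + h t i) (Set.Ici 0) t := by
      intro i t ht
      have hD := deriv_lincomb z (fun j => (B *ᵥ z t) j + g t j) (fun j => Q i j) t
        (fun j => hz j t ht)
      have hfun : (fun s => ∑ j, Q i j * z s j) = fun s => w s i := by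
        funext s
        simp [hwdef, Matrix.mulVec, dotProduct]
      have hcomm : B'' *ᵥ (Q *ᵥ z t) = Q *ᵥ (B *ᵥ z t) := by
        rw [Matrix.mulVec_mulVec, ← hQB, ← Matrix.mulVec_mulVec]
      have hval : (∑ j, Q i j * ((B *ᵥ z t) j + g t j)) = (B'' *ᵥ w t) i + h t i := by
        simp only [hwdef, hhdef, hcomm]
        simp [Matrix.mulVec, dotProduct, mul_add, Finset.sum_add_distrib]
      rw [hfun, hval] at hD
      exact hD
    have hhcont : ∀ i, ContinuousOn (fun t => h t i) (Set.Ici 0) := by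
      intro i
      have : ContinuousOn (fun t => ∑ j, Q i j * g t j) (Set.Ici 0) := by
        apply continuousOn_finset_sum
        intro j _
        exact continuousOn_const.mul (hg j)
      exact this
    set K : ℝ := ∑ i, ∑ j, ‖Q i j‖ with hKdef
    have hhb : ∀ t ≥ (0:ℝ), ∀ i, ‖h t i‖ ≤ (c * K) * Real.exp (-α * t) := by
      intro t ht i
      have h1 : ‖h t i‖ ≤ ∑ j, ‖Q i j‖ * ‖g t j‖ := by
        have : h t i = ∑ j, Q i j * g t j := by
          simp [hhdef, Matrix.mulVec, dotProduct]
        rw [this]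
        exact (norm_sum_le _ _).trans (le_of_eq (by simp [norm_mul]))
      have h2 : ∑ j, ‖Q i j‖ * ‖g t j‖ ≤ ∑ j, ‖Q i j‖ * (c * Real.exp (-α * t)) := by
        apply Finset.sum_le_sum
        intro j _
        exact mul_le_mul_of_nonneg_left (hgb t ht j) (norm_nonneg _)
      have h3 : (∑ j, ‖Q i j‖) ≤ K := by
        rw [hKdef]
        exact Finset.single_le_sum (f := fun i => ∑ j, ‖Q i j‖)
          (fun i _ => Finset.sum_nonneg fun j _ => norm_nonneg _) (Finset.mem_univ i)
      calc ‖h t i‖ ≤ ∑ j, ‖Q i j‖ * (c * Real.exp (-α * t)) := h1.trans h2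
        _ = (∑ j, ‖Q i j‖) * (c * Real.exp (-α * t)) := by rw [Finset.sum_mul]
        _ ≤ K * (c * Real.exp (-α * t)) :=
            mul_le_mul_of_nonneg_right h3 (by positivity)
        _ = (c * K) * Real.exp (-α * t) := by ring
    -- apply induction hypothesis to the tail
    obtain ⟨Csub, hCsub, βsub, hβsub, hβsubα, hsubbound⟩ :=
      ih Bsub hsubHur (fun t k => h t (Fin.succ k)) (fun k => hhcont k.succ) (c*K) α hα
        (fun t ht k => hhb t ht k.succ) (fun t k => w t (Fin.succ k))
        (by
          intro k t ht
          have := hw (Fin.succ k) t ht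
          have heq : (B'' *ᵥ w t) (Fin.succ k)
              = ((Bsub *ᵥ fun k' => w t (Fin.succ k')) k) := by
            simp [Matrix.mulVec, dotProduct, Fin.sum_univ_succ, hcol,
              Fin.succ_ne_zero, hBsub, Matrix.submatrix_apply]
          rwa [heq] at this)
    -- scalar ODE for head coordinate
    have hwcont : ∀ i, ContinuousOn (fun t => w t i) (Set.Ici 0) :=
      fun i t ht => (hw i t ht).continuousWithinAt
    set M : ℝ := ∑ j, ‖B'' 0 (Fin.succ j)‖ with hM
    have hM0 : 0 ≤ M := Finset.sum_nonneg fun j _ => norm_nonneg _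
    set G : ℝ → ℂ := fun t => (∑ j, B'' 0 (Fin.succ j) * w t (Fin.succ j)) + h t 0 with hG
    have hy : ∀ t ≥ (0:ℝ), HasDerivWithinAt (fun s => w s 0) (μ * w t 0 + G t) (Set.Ici 0) t := by
      intro t ht
      have hbase := hw 0 t ht
      have heq : (B'' *ᵥ w t) 0 + h t 0 = μ * w t 0 + G t := by
        have h1 : (B'' *ᵥ w t) 0 = μ * w t 0 + ∑ j, B'' 0 (Fin.succ j) * w t (Fin.succ j) := by
          simp [Matrix.mulVec, dotProduct, Fin.sum_univ_succ, hcol 0]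
        rw [h1, hG]
        ring
      rwa [heq] at hbase
    have hGcont : ContinuousOn G (Set.Ici 0) := by
      apply ContinuousOn.add _ (hhcont 0)
      apply continuousOn_finset_sum
      intro j _
      exact continuousOn_const.mul (hwcont (Fin.succ j))
    have hcK0 : 0 ≤ c * K := by
      have : 0 ≤ K := Finset.sum_nonneg fun i _ =>
        Finset.sum_nonneg fun j _ => norm_nonneg _
      positivity
    have hGb : ∀ t ≥ (0:ℝ), ‖G t‖ ≤ (M * Csub + c * K) * Real.exp (-βsub * t) := by
      intro t ht
      have hexple : Real.exp (-α * t) ≤ Real.exp (-βsub * t) :=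
        Real.exp_le_exp.mpr (by nlinarith)
      have h1 : ‖∑ j, B'' 0 (Fin.succ j) * w t (Fin.succ j)‖ ≤ M * (Csub * Real.exp (-βsub * t)) := by
        refine (norm_sum_le _ _).trans ?_
        rw [hM, Finset.sum_mul]
        apply Finset.sum_le_sum
        intro j _
        rw [norm_mul]
        exact mul_le_mul_of_nonneg_left (hsubbound t ht j) (norm_nonneg _)
      have h2 : ‖h t 0‖ ≤ (c * K) * Real.exp (-βsub * t) := by
        refine (hhb t ht 0).trans ?_
        exact mul_le_mul_of_nonneg_left hexple hcK0
      calc ‖G t‖ ≤ ‖∑ j, B'' 0 (Fin.succ j) * w t (Fin.succ j)‖ + ‖h t 0‖ := norm_add_le _ _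
        _ ≤ M * (Csub * Real.exp (-βsub * t)) + (c * K) * Real.exp (-βsub * t) :=
            add_le_add h1 h2
        _ = (M * Csub + c * K) * Real.exp (-βsub * t) := by ring
    set β0 : ℝ := min (βsub/2) (-μ.re/2) with hβ0def
    have hβ00 : 0 < β0 := lt_min (by linarith) (by linarith)
    have hβ0βsub : β0 < βsub := (min_le_left _ _).trans_lt (by linarith)
    have hβ0μ : β0 ≤ -μ.re := (min_le_right _ _).trans (by linarith)
    have hhead := scalar_decay μ (M * Csub + c * K) βsub β0 hβ00 hβ0βsub hβ0μ
      G hGcont hGb (fun s => w s 0) hy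
    have hMCK : 0 ≤ M * Csub + c * K := by nlinarith
    set C0 : ℝ := ‖w 0 0‖ + (M * Csub + c * K) / (βsub - β0) with hC0
    have hC0nn : 0 ≤ C0 := by
      have h1 : 0 ≤ (M * Csub + c * K) / (βsub - β0) := div_nonneg hMCK (by linarith)
      have h2 := norm_nonneg (w 0 0)
      rw [hC0]; linarith
    have hwall : ∀ t ≥ (0:ℝ), ∀ i, ‖w t i‖ ≤ (max C0 Csub) * Real.exp (-β0 * t) := by
      intro t ht i
      refine Fin.cases ?_ ?_ i
      · exact (hhead t ht).trans
          (mul_le_mul_of_nonneg_right (le_max_left _ _) (Real.exp_nonneg _))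
      · intro k
        refine (hsubbound t ht k).trans ?_
        have hexple : Real.exp (-βsub * t) ≤ Real.exp (-β0 * t) :=
          Real.exp_le_exp.mpr (by nlinarith)
        calc Csub * Real.exp (-βsub * t) ≤ Csub * Real.exp (-β0 * t) :=
              mul_le_mul_of_nonneg_left hexple (le_of_lt hCsub)
          _ ≤ (max C0 Csub) * Real.exp (-β0 * t) :=
              mul_le_mul_of_nonneg_right (le_max_right _ _) (Real.exp_nonneg _)
    -- return to z
    have hzw : ∀ t, z t = P *ᵥ w t := by
      intro t
      rw [hwdef]
      rw [Matrix.mulVec_mulVec, hPQ, Matrix.one_mulVec]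
    set KP : ℝ := ∑ i, ∑ j, ‖P i j‖ with hKP
    refine ⟨KP * (max C0 Csub) + 1, ?_, β0, hβ00, ?_, ?_⟩
    · have h1 : 0 ≤ KP := Finset.sum_nonneg fun i _ =>
        Finset.sum_nonneg fun j _ => norm_nonneg _
      have h2 : 0 < max C0 Csub := lt_max_of_lt_right hCsub
      nlinarith
    · calc β0 < βsub := hβ0βsub
        _ < α := hβsubα
    · intro t ht i
      have h1 : ‖z t i‖ ≤ ∑ j, ‖P i j‖ * ‖w t j‖ := by
        have : z t i = ∑ j, P i j * w t j := by
          rw [hzw t]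
          simp [Matrix.mulVec, dotProduct]
        rw [this]
        exact (norm_sum_le _ _).trans (le_of_eq (by simp [norm_mul]))
      have h2 : ∑ j, ‖P i j‖ * ‖w t j‖ ≤ ∑ j, ‖P i j‖ * ((max C0 Csub) * Real.exp (-β0 * t)) := by
        apply Finset.sum_le_sum
        intro j _
        exact mul_le_mul_of_nonneg_left (hwall t ht j) (norm_nonneg _)
      have h3 : (∑ j, ‖P i j‖) ≤ KP := by
        rw [hKP]
        exact Finset.single_le_sum (f := fun i => ∑ j, ‖P i j‖)
          (fun i _ => Finset.sum_nonneg fun j _ => norm_nonneg _) (Finset.mem_univ i)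
      have hmaxpos : 0 ≤ (max C0 Csub) * Real.exp (-β0 * t) := by
        have h4 : 0 < max C0 Csub := lt_max_of_lt_right hCsub
        have h5 := Real.exp_nonneg (-β0 * t)
        nlinarith
      calc ‖z t i‖ ≤ ∑ j, ‖P i j‖ * ((max C0 Csub) * Real.exp (-β0 * t)) := h1.trans h2
        _ = (∑ j, ‖P i j‖) * ((max C0 Csub) * Real.exp (-β0 * t)) := by rw [Finset.sum_mul]
        _ ≤ KP * ((max C0 Csub) * Real.exp (-β0 * t)) :=
            mul_le_mul_of_nonneg_right h3 hmaxpos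
        _ ≤ (KP * (max C0 Csub) + 1) * Real.exp (-β0 * t) := by
            have := Real.exp_nonneg (-β0 * t)
            nlinarith

/-- if `A` is Hurwitz (every root of its characteristic polynomial over `ℂ`
has strictly negative real part) and `d` is continuous with `‖d(t)‖ ≤ c e^{−α t}`, then
every differentiable `x` with `x′(t) = A x(t) + d(t)` for `t ≥ 0` converges to zero
exponentially: there are `C > 0`, `β > 0` with `‖x(t)‖ ≤ C e^{−β t}` for all `t ≥ 0`. -/
theorem statement18 (n : ℕ) (A : Matrix (Fin n) (Fin n) ℝ)
    (hHur : ∀ z : ℂ, (A.charpoly.map (algebraMap ℝ ℂ)).IsRoot z → z.re < 0)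
    (d : ℝ → Fin n → ℝ) (hd : ContinuousOn d (Set.Ici 0))
    (c α : ℝ) (hc : 0 < c) (hα : 0 < α)
    (hdbound : ∀ t ≥ (0 : ℝ), Real.sqrt (∑ i, d t i ^ 2) ≤ c * Real.exp (-α * t))
    (x : ℝ → Fin n → ℝ)
    (hx : ∀ t ∈ Set.Ici (0 : ℝ), HasDerivWithinAt x (A *ᵥ x t + d t) (Set.Ici 0) t) :
    ∃ C > (0 : ℝ), ∃ β > (0 : ℝ), ∀ t ≥ (0 : ℝ),
      Real.sqrt (∑ i, x t i ^ 2) ≤ C * Real.exp (-β * t) := by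
  set Ac : Matrix (Fin n) (Fin n) ℂ := A.map (algebraMap ℝ ℂ) with hAc
  have hHurC : ∀ μ : ℂ, Ac.charpoly.IsRoot μ → μ.re < 0 := by
    intro μ hμ
    apply hHur
    rwa [← Matrix.charpoly_map] 
  set zc : ℝ → Fin n → ℂ := fun t i => (x t i : ℂ) with hzc
  set gc : ℝ → Fin n → ℂ := fun t i => (d t i : ℂ) with hgc
  have hgccont : ∀ i, ContinuousOn (fun t => gc t i) (Set.Ici 0) := by
    intro i
    exact Complex.continuous_ofReal.comp_continuousOn
      ((continuous_apply i).comp_continuousOn hd)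
  have hgcb : ∀ t ≥ (0:ℝ), ∀ i, ‖gc t i‖ ≤ c * Real.exp (-α * t) := by
    intro t ht i
    have h1 : ‖gc t i‖ = |d t i| := by simp [hgc]
    have h2 : |d t i| ≤ Real.sqrt (∑ j, d t j ^ 2) := by
      rw [← Real.sqrt_sq_eq_abs]
      apply Real.sqrt_le_sqrt
      exact Finset.single_le_sum (f := fun j => d t j ^ 2)
        (fun j _ => sq_nonneg _) (Finset.mem_univ i)
    rw [h1]
    exact h2.trans (hdbound t ht)
  have hzcderiv : ∀ i, ∀ t ≥ (0:ℝ),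
      HasDerivWithinAt (fun s => zc s i) ((Ac *ᵥ zc t) i + gc t i) (Set.Ici 0) t := by
    intro i t ht
    have hcoord : HasDerivWithinAt (fun s => x s i) ((A *ᵥ x t + d t) i) (Set.Ici 0) t :=
      hasDerivWithinAt_pi.mp (hx t ht) i
    have hcomp := Complex.ofRealCLM.hasFDerivAt.comp_hasDerivWithinAt t hcoord
    have heq : (Complex.ofRealCLM ((A *ᵥ x t + d t) i) : ℂ) = (Ac *ᵥ zc t) i + gc t i := by
      simp [hAc, hzc, hgc, Matrix.mulVec, dotProduct, Matrix.map_apply]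
    rw [heq] at hcomp
    exact hcomp
  obtain ⟨C, hC, β, hβ, hβα, hbound⟩ := vec_decay n Ac hHurC gc hgccont c α hα hgcb zc hzcderiv
  refine ⟨(Real.sqrt n + 1) * C, by positivity, β, hβ, ?_⟩
  intro t ht
  have hxb : ∀ i, |x t i| ≤ C * Real.exp (-β * t) := by
    intro i
    have := hbound t ht i
    simpa [hzc] using this
  have hsum : (∑ i, x t i ^ 2) ≤ n * (C * Real.exp (-β * t)) ^ 2 := by
    calc (∑ i, x t i ^ 2) ≤ ∑ _i : Fin n, (C * Real.exp (-β * t)) ^ 2 := by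
          apply Finset.sum_le_sum
          intro i _
          rw [← sq_abs (x t i)]
          exact pow_le_pow_left₀ (abs_nonneg _) (hxb i) 2
      _ = n * (C * Real.exp (-β * t)) ^ 2 := by simp [Finset.sum_const, nsmul_eq_mul]
  calc Real.sqrt (∑ i, x t i ^ 2) ≤ Real.sqrt (n * (C * Real.exp (-β * t)) ^ 2) :=
        Real.sqrt_le_sqrt hsum
    _ = Real.sqrt n * (C * Real.exp (-β * t)) := by
        rw [Real.sqrt_mul (Nat.cast_nonneg n), Real.sqrt_sq (by positivity)]
    _ ≤ (Real.sqrt n + 1) * C * Real.exp (-β * t) := by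
        have h1 : (0:ℝ) ≤ C * Real.exp (-β * t) := by positivity
        nlinarith [Real.sqrt_nonneg (n:ℝ)]
    _ = (Real.sqrt n + 1) * C * Real.exp (-β * t) := rfl
end
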